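/- Let m, n be positive integers with m ≥ n, 𝔪 a regular nilpotent endomorphism of ℂ^m and 𝔫 a regular nilpotent endomorphism of ℂ^n. Then the endomorphism 𝔪 ⊗ 1 + 1 ⊗ 𝔫 of ℂ^m ⊗ ℂ^n is nilpotent and its kernel has dimension min(m, n). -/

import Mathlib

/-!
A regular nilpotent `f` on `ℂ^m` has one-dimensional kernel, so `dim ker f^k ≤ k` and
`f^(m-1) ≠ 0`; for any `e` with `f^(m-1) e ≠ 0`, the vectors `e, f e, …, f^(m-1) e` form a basis.
Writing `x = ∑ f^i e ⊗ x_i`, the equation `(f ⊗ 1 + 1 ⊗ g) x = 0` reads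
`x_(i-1) + g x_i = 0` for `0 < i < m` and `g x_0 = 0`. So every coordinate is determined by the
last one, `x_i = (-g)^(m-1-i) x_(m-1)`, and the remaining equation `g x_0 = 0` holds automatically
because `g^m = 0` (as `n ≤ m`). Hence the last coordinate identifies the kernel with `ℂ^n`.
Nilpotency holds because `f ⊗ 1` and `1 ⊗ g` are commuting nilpotents.
-/

open Module LinearMap TensorProduct

theorem IsNilpotent.pow_finrank_eq_zero {R M : Type*} [CommRing R] [IsDomain R] [AddCommGroup M]
    [Module R M] [Module.Finite R M] [Module.Free R M] {f : End R M} (hf : IsNilpotent f) :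
    f ^ finrank R M = 0 := by
  simpa [hf.charpoly_eq_X_pow_finrank] using f.aeval_self_charpoly

section Field

variable {K V : Type*} [Field K] [AddCommGroup V] [Module K V]

theorem Module.End.finrank_ker_pow_le [FiniteDimensional K V] (f : End K V) (k : ℕ) :
    finrank K (ker (f ^ k)) ≤ k * finrank K (ker f) := by
  induction k with
  | zero => simp [End.one_eq_id]
  | succ k ih =>
    have h := lift_rank_comap_le (f := f) (ker (f ^ k))
    rw [← ker_comp, ← End.mul_eq_comp, ← pow_succ] at h
    simp only [Cardinal.lift_id, ← finrank_eq_rank] at h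
    norm_cast at h
    rw [add_one_mul]
    omega

theorem Module.End.linearIndependent_pow_apply {f : End K V} {e : V} {N : ℕ}
    (hN : (f ^ (N + 1)) e = 0) (he : (f ^ N) e ≠ 0) :
    LinearIndependent K fun i : Fin (N + 1) ↦ (f ^ (i : ℕ)) e := by
  induction N generalizing e with
  | zero => simpa [linearIndependent_unique_iff] using he
  | succ N ih =>
    have hcons : (fun i : Fin (N + 2) ↦ (f ^ (i : ℕ)) e) =
        Fin.cons e fun i : Fin (N + 1) ↦ (f ^ (i : ℕ)) (f e) := by
      ext i
      cases i using Fin.cases <;> simp [pow_succ, End.mul_apply]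
    rw [hcons, linearIndependent_finCons]
    refine ⟨ih (by rwa [← End.mul_apply, ← pow_succ]) (by rwa [← End.mul_apply, ← pow_succ]),
      fun hspan ↦ he ?_⟩
    have : Submodule.span K (Set.range fun i : Fin (N + 1) ↦ (f ^ (i : ℕ)) (f e)) ≤
        ker (f ^ (N + 1)) := by
      rw [Submodule.span_le]
      rintro _ ⟨i, rfl⟩
      change (f ^ (N + 1) * f ^ (i : ℕ) * f) e = 0
      rw [← pow_add, ← pow_succ, show N + 1 + i + 1 = i + (N + 1 + 1) by omega, pow_add,
        End.mul_apply, hN, map_zero]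
    exact this hspan

theorem Module.End.exists_basis_pow_apply [FiniteDimensional K V] {f : End K V}
    (hf : IsNilpotent f) (hker : finrank K (ker f) ≤ 1) {N : ℕ} (hV : finrank K V = N + 1) :
    ∃ (b : Basis (Fin (N + 1)) K V) (e : V), ∀ i, b i = (f ^ (i : ℕ)) e := by
  have hfN : f ^ (N + 1) = 0 := hV ▸ hf.pow_finrank_eq_zero
  obtain ⟨e, he⟩ : ∃ e, (f ^ N) e ≠ 0 := by
    by_contra! h
    have hle := finrank_ker_pow_le f N
    rw [(LinearMap.ext h : f ^ N = 0), ker_zero, finrank_top, hV] at hle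
    have := Nat.mul_le_mul_left N hker
    omega
  have hli := linearIndependent_pow_apply (by rw [hfN, LinearMap.zero_apply]) he
  exact ⟨basisOfLinearIndependentOfCardEqFinrank hli (by simp [hV]), e, by simp⟩

end Field

theorem Commute.pow_apply_eq_pow_apply {R M : Type*} [Semiring R] [AddCommMonoid M] [Module R M]
    {a c : End R M} (hac : Commute a c) {x : M} (h : a x = c x) (k : ℕ) :
    (a ^ k) x = (c ^ k) x := by
  induction k with
  | zero => rfl
  | succ k ih =>
    rw [pow_succ, End.mul_apply, h, ← End.mul_apply, (hac.pow_left k).eq, End.mul_apply, ih,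
      ← End.mul_apply, ← pow_succ']

section Tensor

variable {R V W : Type*} [CommRing R] [AddCommGroup V] [Module R V] [AddCommGroup W] [Module R W]

theorem LinearMap.commute_rTensor_lTensor (f : End R V) (g : End R W) :
    Commute (f.rTensor W) (g.lTensor V) := by
  rw [Commute, SemiconjBy, End.mul_eq_comp, End.mul_eq_comp, rTensor_comp_lTensor,
    lTensor_comp_rTensor]

theorem LinearMap.isNilpotent_rTensor_add_lTensor {f : End R V} {g : End R W}
    (hf : IsNilpotent f) (hg : IsNilpotent g) : IsNilpotent (f.rTensor W + g.lTensor V) := by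
  obtain ⟨k, hk⟩ := hf
  obtain ⟨l, hl⟩ := hg
  refine (commute_rTensor_lTensor f g).isNilpotent_add ⟨k, ?_⟩ ⟨l, ?_⟩
  · rw [rTensor_pow, hk, rTensor_zero]
  · rw [lTensor_pow, hl, lTensor_zero]

theorem TensorProduct.equivFinsuppOfBasisLeft_lTensor_apply {ι : Type*} [DecidableEq ι]
    (b : Basis ι R V) (g : End R W) (x : V ⊗[R] W) (i : ι) :
    equivFinsuppOfBasisLeft b (g.lTensor V x) i = g (equivFinsuppOfBasisLeft b x i) := by
  induction x using TensorProduct.induction_on with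
  | zero => simp
  | tmul v w => simp
  | add x y hx hy => simp [hx, hy]

variable {f : End R V} {N : ℕ} {b : Basis (Fin (N + 1)) R V} {e : V}

theorem Module.Basis.coord_last_pow_apply (hb : ∀ i, b i = (f ^ (i : ℕ)) e)
    (hfe : (f ^ (N + 1)) e = 0) (k : ℕ) :
    b.coord (Fin.last N) ((f ^ k) e) = if k = N then 1 else 0 := by
  rcases Nat.lt_or_ge N k with hNk | hkN
  · rw [← Nat.sub_add_cancel hNk, pow_add, End.mul_apply, hfe, map_zero, map_zero,
      if_neg (by omega)]
  · rw [← hb ⟨k, Nat.lt_succ_of_le hkN⟩, Basis.coord_apply, Basis.repr_self,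
      Finsupp.single_apply]
    exact if_congr (by simp [Fin.ext_iff]) rfl rfl

theorem Module.Basis.coord_eq_coord_last_comp_pow (hb : ∀ i, b i = (f ^ (i : ℕ)) e)
    (hfe : (f ^ (N + 1)) e = 0) (i : Fin (N + 1)) :
    b.coord i = b.coord (Fin.last N) ∘ₗ f ^ (N - i) := by
  refine b.ext fun j ↦ ?_
  rw [comp_apply, hb, ← End.mul_apply, ← pow_add, coord_last_pow_apply hb hfe, ← hb,
    Basis.coord_apply, Basis.repr_self, Finsupp.single_apply]
  exact if_congr (by rw [Fin.ext_iff]; omega) rfl rfl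

theorem TensorProduct.equivFinsuppOfBasisLeft_apply_eq_last_rTensor_pow
    (hb : ∀ i, b i = (f ^ (i : ℕ)) e) (hfe : (f ^ (N + 1)) e = 0) (x : V ⊗[R] W) (i : Fin (N + 1)) :
    equivFinsuppOfBasisLeft b x i =
      equivFinsuppOfBasisLeft b ((f.rTensor W ^ (N - i)) x) (Fin.last N) := by
  rw [equivFinsuppOfBasisLeft_apply, equivFinsuppOfBasisLeft_apply, rTensor_pow,
    b.coord_eq_coord_last_comp_pow hb hfe, rTensor_comp, comp_apply]

theorem eq_zero_of_mem_ker_rTensor_add_lTensor (hb : ∀ i, b i = (f ^ (i : ℕ)) e)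
    (hfe : (f ^ (N + 1)) e = 0) {g : End R W} {x : V ⊗[R] W}
    (hx : x ∈ ker (f.rTensor W + g.lTensor V))
    (hlast : equivFinsuppOfBasisLeft b x (Fin.last N) = 0) : x = 0 := by
  have hshift : f.rTensor W x = (-g).lTensor V x := by
    rw [lTensor_neg, LinearMap.neg_apply, eq_neg_iff_add_eq_zero]
    exact hx
  apply (equivFinsuppOfBasisLeft b).injective
  ext i
  rw [equivFinsuppOfBasisLeft_apply_eq_last_rTensor_pow hb hfe,
    (commute_rTensor_lTensor f (-g)).pow_apply_eq_pow_apply hshift, lTensor_pow,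
    equivFinsuppOfBasisLeft_lTensor_apply, hlast, map_zero, map_zero, Finsupp.coe_zero,
    Pi.zero_apply]

theorem exists_mem_ker_rTensor_add_lTensor (hb : ∀ i, b i = (f ^ (i : ℕ)) e)
    (hfe : (f ^ (N + 1)) e = 0) {g : End R W} (hg : g ^ (N + 1) = 0) (u : W) :
    ∃ x ∈ ker (f.rTensor W + g.lTensor V), equivFinsuppOfBasisLeft b x (Fin.last N) = u := by
  refine ⟨∑ i ∈ Finset.range (N + 1), (f ^ i) e ⊗ₜ ((-g) ^ (N - i)) u, ?_, ?_⟩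
  · let a (i : ℕ) : V ⊗[R] W := (f ^ i) e ⊗ₜ ((-g) ^ (N + 1 - i)) u
    have hterm : ∀ i ∈ Finset.range (N + 1),
        (f.rTensor W + g.lTensor V) ((f ^ i) e ⊗ₜ ((-g) ^ (N - i)) u) = a (i + 1) - a i := by
      intro i hi
      have hsucc : N + 1 - i = N - i + 1 := by
        rw [Finset.mem_range] at hi
        omega
      simp only [a, LinearMap.add_apply, rTensor_tmul, lTensor_tmul, hsucc, Nat.add_sub_add_right,
        pow_succ', End.mul_apply, LinearMap.neg_apply, tmul_neg, sub_eq_add_neg, neg_neg]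
    rw [mem_ker, map_sum, Finset.sum_congr rfl hterm, Finset.sum_range_sub]
    simp only [a, Nat.sub_zero, Nat.sub_self, hfe, neg_pow g, hg, mul_zero, LinearMap.zero_apply,
      zero_tmul, tmul_zero, sub_zero]
  · simp [map_sum, ← Basis.coord_apply, b.coord_last_pow_apply hb hfe]

noncomputable def kerRTensorAddLTensorEquiv (hb : ∀ i, b i = (f ^ (i : ℕ)) e)
    (hfe : (f ^ (N + 1)) e = 0) {g : End R W} (hg : g ^ (N + 1) = 0) :
    ker (f.rTensor W + g.lTensor V) ≃ₗ[R] W :=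
  LinearEquiv.ofBijective
    ((Finsupp.lapply (Fin.last N) ∘ₗ (equivFinsuppOfBasisLeft b).toLinearMap).domRestrict _)
    ⟨(injective_iff_map_eq_zero _).mpr fun x hx ↦
        Subtype.ext (eq_zero_of_mem_ker_rTensor_add_lTensor hb hfe x.2 hx),
      fun u ↦
        let ⟨x, hx, hxu⟩ := exists_mem_ker_rTensor_add_lTensor hb hfe hg u
        ⟨⟨x, hx⟩, hxu⟩⟩

end Tensor

theorem tensor_sum_regular_nilpotent_ker_general (m n : ℕ) (hm : 0 < m) (hmn : n ≤ m)
    (f : Module.End ℂ (Fin m → ℂ)) (g : Module.End ℂ (Fin n → ℂ))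
    (hfnil : IsNilpotent f) (hgnil : IsNilpotent g)
    (hf : Module.finrank ℂ (LinearMap.range f) = m - 1) :
    IsNilpotent (TensorProduct.map f LinearMap.id + TensorProduct.map LinearMap.id g
      : Module.End ℂ ((Fin m → ℂ) ⊗[ℂ] (Fin n → ℂ))) ∧
    Module.finrank ℂ (LinearMap.ker
      (TensorProduct.map f LinearMap.id + TensorProduct.map LinearMap.id g
      : Module.End ℂ ((Fin m → ℂ) ⊗[ℂ] (Fin n → ℂ)))) = min m n := by
  rw [← rTensor_def, ← lTensor_def]
  refine ⟨isNilpotent_rTensor_add_lTensor hfnil hgnil, ?_⟩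
  obtain ⟨N, rfl⟩ := Nat.exists_eq_add_one_of_ne_zero hm.ne'
  have hker : finrank ℂ (ker f) ≤ 1 := by
    have := f.finrank_range_add_finrank_ker
    rw [hf, finrank_fin_fun] at this
    omega
  obtain ⟨b, e, hb⟩ := End.exists_basis_pow_apply hfnil hker (finrank_fin_fun ℂ)
  have hfN : f ^ (N + 1) = 0 := by simpa using hfnil.pow_finrank_eq_zero
  have hgn : g ^ n = 0 := by simpa using hgnil.pow_finrank_eq_zero
  have hfe : (f ^ (N + 1)) e = 0 := by rw [hfN, LinearMap.zero_apply]
  have hg : g ^ (N + 1) = 0 := pow_eq_zero_of_le hmn hgn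
  rw [(kerRTensorAddLTensorEquiv hb hfe hg).finrank_eq, finrank_fin_fun, min_eq_right hmn]

/-- For m ≥ n and regular nilpotent 𝔪, 𝔫 on ℂ^m, ℂ^n, the operator 𝔪 ⊗ 1 + 1 ⊗ 𝔫 is
nilpotent and its kernel has dimension min(m,n). -/
theorem tensor_sum_regular_nilpotent_ker (m n : ℕ) (hm : 0 < m) (hn : 0 < n) (hmn : n ≤ m)
    (f : Module.End ℂ (Fin m → ℂ)) (g : Module.End ℂ (Fin n → ℂ))
    (hfnil : IsNilpotent f) (hgnil : IsNilpotent g)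
    (hf : Module.finrank ℂ (LinearMap.range f) = m - 1)
    (hg : Module.finrank ℂ (LinearMap.range g) = n - 1) :
    IsNilpotent (TensorProduct.map f LinearMap.id + TensorProduct.map LinearMap.id g
      : Module.End ℂ ((Fin m → ℂ) ⊗[ℂ] (Fin n → ℂ))) ∧
    Module.finrank ℂ (LinearMap.ker
      (TensorProduct.map f LinearMap.id + TensorProduct.map LinearMap.id g
      : Module.End ℂ ((Fin m → ℂ) ⊗[ℂ] (Fin n → ℂ)))) = min m n :=
  tensor_sum_regular_nilpotent_ker_general m n hm hmn f g hfnil hgnil hf
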